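/- Let n ≥ 2, let A be a real n×n singular irreducible M-matrix, and let U_G be the FSAI upper triangular factor associated with an admissible pattern S_U. Then the product A U_G is a singular M-matrix. -/

import Mathlib

open Matrix

/-- The spectral radius of a real matrix: the maximum modulus of its complex
eigenvalues (supremum of moduli of elements of the complex spectrum). -/
noncomputable def specRad {n : ℕ} (B : Matrix (Fin n) (Fin n) ℝ) : ℝ :=
  sSup ((fun z : ℂ => ‖z‖) '' spectrum ℂ (B.map Complex.ofReal))

/-- A real square matrix is a Z-matrix if its off-diagonal entries are nonpositive. -/
def IsZMatrix {n : ℕ} (A : Matrix (Fin n) (Fin n) ℝ) : Prop :=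
  ∀ i j, i ≠ j → A i j ≤ 0

/-- A Z-matrix `A` is a nonsingular M-matrix if `A = s • 1 - B` with `B`
entrywise nonnegative and `s > ρ(B)`. -/
def IsNonsingularMMatrix {n : ℕ} (A : Matrix (Fin n) (Fin n) ℝ) : Prop :=
  IsZMatrix A ∧ ∃ (s : ℝ) (B : Matrix (Fin n) (Fin n) ℝ),
    (∀ i j, 0 ≤ B i j) ∧ specRad B < s ∧ A = s • (1 : Matrix (Fin n) (Fin n) ℝ) - B

/-- A Z-matrix `A` is a singular M-matrix if `A = ρ(B) • 1 - B` with `B`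
entrywise nonnegative. -/
def IsSingularMMatrix {n : ℕ} (A : Matrix (Fin n) (Fin n) ℝ) : Prop :=
  IsZMatrix A ∧ ∃ B : Matrix (Fin n) (Fin n) ℝ,
    (∀ i j, 0 ≤ B i j) ∧ A = specRad B • (1 : Matrix (Fin n) (Fin n) ℝ) - B

/-- A matrix is irreducible if its directed graph (edge `i → j` iff `A i j ≠ 0`)
is strongly connected. -/
def IsIrreducibleMatrix {n : ℕ} (A : Matrix (Fin n) (Fin n) ℝ) : Prop :=
  ∀ i j : Fin n, Relation.ReflTransGen (fun a b : Fin n => A a b ≠ 0) i j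

/-- Lower triangular real matrix. -/
def IsLowerTri {n : ℕ} (L : Matrix (Fin n) (Fin n) ℝ) : Prop :=
  ∀ i j : Fin n, i < j → L i j = 0

/-- Upper triangular real matrix. -/
def IsUpperTri {n : ℕ} (U : Matrix (Fin n) (Fin n) ℝ) : Prop :=
  ∀ i j : Fin n, j < i → U i j = 0

/-- `L` is an FSAI lower triangular factor of `A` for the pattern `S`:
`L` is lower triangular, vanishes off the pattern, and `(L * A) i j = δ i j`
on the pattern. -/
def IsFSAILowerFactor {n : ℕ} (A L : Matrix (Fin n) (Fin n) ℝ)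
    (S : Set (Fin n × Fin n)) : Prop :=
  IsLowerTri L ∧ (∀ p : Fin n × Fin n, p ∉ S → L p.1 p.2 = 0) ∧
    ∀ p : Fin n × Fin n, p ∈ S → (L * A) p.1 p.2 = if p.1 = p.2 then 1 else 0

/-- `U` is an FSAI upper triangular factor of `A` for the pattern `S`:
`U` is upper triangular, vanishes off the pattern, and `(A * U) i j = δ i j`
on the pattern. -/
def IsFSAIUpperFactor {n : ℕ} (A U : Matrix (Fin n) (Fin n) ℝ)
    (S : Set (Fin n × Fin n)) : Prop :=
  IsUpperTri U ∧ (∀ p : Fin n × Fin n, p ∉ S → U p.1 p.2 = 0) ∧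
    ∀ p : Fin n × Fin n, p ∈ S → (A * U) p.1 p.2 = if p.1 = p.2 then 1 else 0

/-!
Write `A = ρ(B) • 1 - B` with `B ≥ 0` irreducible. Because the pattern is upper triangular and
misses `(n - 1, n)`, every column pattern `J = {k | (k, j) ∈ S}` is a proper set of indices, so
`ρ(B[J, J]) < ρ(B)`: the principal submatrix `A[J, J]` is a nonsingular M-matrix and has a
nonnegative inverse. Column `j` of `U` is supported on `J` and solves `A[J, J] u = e_j` there, hence
`U ≥ 0`, and then `A * U` is a Z-matrix (off the pattern its entries are sums of `A i k * U k j`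
with `k ≠ i`). The positive left Perron vector `y` of `A` satisfies `y ᵥ* (A * U) = 0`, and a
Z-matrix with a positive left null vector is a singular M-matrix.

The Perron–Frobenius input is derived from one fact: `(t • 1 - B)⁻¹ ≥ 0` as long as `t • 1 - B`
stays invertible on `[t, ∞)`, obtained from the Neumann series for large `t` and continued
downwards by continuous induction.
-/

namespace Matrix

variable {m : Type*}

section Spectrum

variable [Fintype m] [DecidableEq m]

/-- `specRad` for an arbitrary finite index type, so that it applies to principal submatrices. -/
noncomputable def specRadius (B : Matrix m m ℝ) : ℝ :=
  sSup ((fun z : ℂ => ‖z‖) '' spectrum ℂ (B.map Complex.ofReal))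

lemma mem_spectrum_iff_det_eq_zero {M : Matrix m m ℂ} {z : ℂ} :
    z ∈ spectrum ℂ M ↔ (z • (1 : Matrix m m ℂ) - M).det = 0 := by
  rw [spectrum.mem_iff, Algebra.algebraMap_eq_smul_one, isUnit_iff_isUnit_det, isUnit_iff_ne_zero,
    not_not]

lemma ofReal_mem_spectrum_map_iff {B : Matrix m m ℝ} {t : ℝ} :
    (t : ℂ) ∈ spectrum ℂ (B.map Complex.ofReal) ↔ (t • (1 : Matrix m m ℝ) - B).det = 0 := by
  have hmap : (t : ℂ) • (1 : Matrix m m ℂ) - B.map Complex.ofReal =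
      Complex.ofRealHom.mapMatrix (t • 1 - B) := by
    ext i j
    simp [one_apply, apply_ite]
  rw [mem_spectrum_iff_det_eq_zero, hmap, ← RingHom.map_det, Complex.ofRealHom_eq_coe,
    Complex.ofReal_eq_zero]

lemma exists_mulVec_eq_smul_of_mem_spectrum {M : Matrix m m ℂ} {z : ℂ}
    (hz : z ∈ spectrum ℂ M) : ∃ v ≠ 0, M *ᵥ v = z • v := by
  obtain ⟨v, hv0, hv⟩ := exists_mulVec_eq_zero_iff.2 (mem_spectrum_iff_det_eq_zero.1 hz)
  refine ⟨v, hv0, ?_⟩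
  rw [sub_mulVec, smul_mulVec, one_mulVec, sub_eq_zero] at hv
  exact hv.symm

lemma norm_le_specRadius (B : Matrix m m ℝ) {z : ℂ}
    (hz : z ∈ spectrum ℂ (B.map Complex.ofReal)) : ‖z‖ ≤ specRadius B :=
  le_csSup ((finite_spectrum _).image _).bddAbove ⟨z, hz, rfl⟩

lemma exists_norm_eq_specRadius [Nonempty m] (B : Matrix m m ℝ) :
    ∃ z ∈ spectrum ℂ (B.map Complex.ofReal), ‖z‖ = specRadius B :=
  ((spectrum.nonempty_of_isAlgClosed_of_finiteDimensional ℂ _).image _).csSup_mem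
    ((finite_spectrum _).image _)

lemma det_ne_zero_of_specRadius_lt {B : Matrix m m ℝ} {t : ℝ} (ht : specRadius B < t) :
    (t • (1 : Matrix m m ℝ) - B).det ≠ 0 := fun h => by
  have := norm_le_specRadius B (ofReal_mem_spectrum_map_iff.2 h)
  rw [Complex.norm_real, Real.norm_eq_abs] at this
  linarith [le_abs_self t]

lemma specRadius_transpose (B : Matrix m m ℝ) : specRadius Bᵀ = specRadius B := by
  have hspec : spectrum ℂ (Bᵀ.map Complex.ofReal) = spectrum ℂ (B.map Complex.ofReal) := by
    ext z
    rw [mem_spectrum_iff_det_eq_zero, mem_spectrum_iff_det_eq_zero, ← det_transpose,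
      transpose_sub, transpose_smul, transpose_one, transpose_map, transpose_transpose]
  rw [specRadius, specRadius, hspec]

end Spectrum

section Resolvent

variable [Fintype m] [DecidableEq m] {B : Matrix m m ℝ}

lemma nonneg_of_inv_nonneg_of_mulVec_nonneg {M : Matrix m m ℝ} (hdet : M.det ≠ 0)
    (hR : ∀ i j, 0 ≤ M⁻¹ i j) {u : m → ℝ} (hu : ∀ i, 0 ≤ (M *ᵥ u) i) (i : m) : 0 ≤ u i := by
  rw [← one_mulVec u, ← nonsing_inv_mul M (isUnit_iff_ne_zero.2 hdet), ← mulVec_mulVec]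
  exact Finset.sum_nonneg fun k _ => mul_nonneg (hR i k) (hu k)

section Neumann

attribute [local instance] Matrix.linftyOpNormedRing Matrix.linftyOpNormedAlgebra

/-- Here `‖B‖` is the `ℓ∞` operator norm (the largest absolute row sum). -/
lemma resolvent_nonneg_of_norm_lt (hB : ∀ i j, 0 ≤ B i j) {s : ℝ} (hs : ‖B‖ < s) :
    ∀ i j, 0 ≤ (s • (1 : Matrix m m ℝ) - B)⁻¹ i j := by
  have : CompleteSpace (Matrix m m ℝ) := FiniteDimensional.complete ℝ _
  have hs0 : 0 < s := (norm_nonneg B).trans_lt hs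
  set X := s⁻¹ • B
  have hX : ‖X‖ < 1 := by
    rwa [norm_smul, Real.norm_of_nonneg (inv_nonneg.2 hs0.le), inv_mul_lt_one₀ hs0]
  have hXnn : ∀ i j, 0 ≤ X i j := fun i j => mul_nonneg (inv_nonneg.2 hs0.le) (hB i j)
  have hinv : (s⁻¹ • ∑' k, X ^ k) * (s • (1 : Matrix m m ℝ) - B) = 1 := by
    have hfac : s • (1 : Matrix m m ℝ) - B = s • (1 - X) := by
      rw [smul_sub, smul_smul, mul_inv_cancel₀ hs0.ne', one_smul]
    rw [hfac, smul_mul_smul_comm, inv_mul_cancel₀ hs0.ne', one_smul]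
    exact geom_series_mul_neg X hX
  intro i j
  rw [inv_eq_left_inv hinv]
  exact mul_nonneg (inv_nonneg.2 hs0.le) ((Pi.hasSum.1 (Pi.hasSum.1
    (summable_geometric_of_norm_lt_one hX).hasSum i) j).nonneg fun k => pow_apply_nonneg hXnn k i j)

lemma exists_forall_ge_resolvent_nonneg (hB : ∀ i j, 0 ≤ B i j) :
    ∃ b : ℝ, ∀ s, b ≤ s → ∀ i j, 0 ≤ (s • (1 : Matrix m m ℝ) - B)⁻¹ i j :=
  ⟨‖B‖ + 1, fun _ hs => resolvent_nonneg_of_norm_lt hB (by linarith)⟩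

lemma exists_resolvent_sub_nonneg {s : ℝ} (hdet : (s • (1 : Matrix m m ℝ) - B).det ≠ 0)
    (hR : ∀ i j, 0 ≤ (s • (1 : Matrix m m ℝ) - B)⁻¹ i j) :
    ∃ δ > 0, ∀ c, 0 ≤ c → c < δ → ∀ i j, 0 ≤ ((s - c) • (1 : Matrix m m ℝ) - B)⁻¹ i j := by
  set R := (s • (1 : Matrix m m ℝ) - B)⁻¹
  refine ⟨1 / (‖R‖ + 1), by positivity, fun c hc0 hcδ i j => ?_⟩
  have hfac : (s - c) • (1 : Matrix m m ℝ) - B = (s • 1 - B) * (1 - c • R) := by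
    rw [mul_sub, mul_one, Matrix.mul_smul, mul_nonsing_inv _ (isUnit_iff_ne_zero.2 hdet),
      sub_smul]
    abel
  have hX : ‖c • R‖ < 1 := by
    rw [norm_smul, Real.norm_of_nonneg hc0]
    rw [lt_div_iff₀ (by positivity)] at hcδ
    nlinarith [norm_nonneg R]
  rw [hfac, mul_inv_rev, mul_apply]
  exact Finset.sum_nonneg fun l _ =>
    mul_nonneg (one_smul ℝ (1 : Matrix m m ℝ) ▸
      resolvent_nonneg_of_norm_lt (fun i j => mul_nonneg hc0 (hR i j)) (s := 1) hX i l) (hR l j)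

end Neumann

lemma continuousAt_resolvent {s : ℝ} (hdet : (s • (1 : Matrix m m ℝ) - B).det ≠ 0) :
    ContinuousAt (fun t : ℝ => (t • (1 : Matrix m m ℝ) - B)⁻¹) s := by
  refine (continuousAt_matrix_inv _ ?_).comp (by fun_prop)
  rw [Ring.inverse_eq_inv']
  exact continuousAt_inv₀ hdet

theorem resolvent_nonneg (hB : ∀ i j, 0 ≤ B i j) {t : ℝ}
    (hdet : ∀ s, t ≤ s → (s • (1 : Matrix m m ℝ) - B).det ≠ 0) :
    ∀ i j, 0 ≤ (t • (1 : Matrix m m ℝ) - B)⁻¹ i j := by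
  obtain ⟨b, hb⟩ := exists_forall_ge_resolvent_nonneg hB
  have hclosed : IsClosed (Set.Icc t (max t b) ∩
      (fun s : ℝ => (s • (1 : Matrix m m ℝ) - B)⁻¹) ⁻¹' {M | ∀ i j, 0 ≤ M i j}) := by
    refine ContinuousOn.preimage_isClosed_of_isClosed
      (fun s hs => (continuousAt_resolvent (hdet s hs.1)).continuousWithinAt) isClosed_Icc ?_
    simp only [Set.ofPred_forall]
    exact isClosed_iInter fun i => isClosed_iInter fun j =>
      isClosed_le continuous_const ((continuous_apply j).comp (continuous_apply i))
  rw [Set.inter_comm] at hclosed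
  refine hclosed.mem_of_ge_of_forall_exists_lt (hb _ (le_max_right t b)) (le_max_left t b) ?_
  rintro x ⟨hx, htx, -⟩
  obtain ⟨δ, hδ, hδR⟩ := exists_resolvent_sub_nonneg (hdet x htx.le) hx
  have hc : 0 < min (x - t) (δ / 2) := lt_min (by linarith) (by linarith)
  refine ⟨x - min (x - t) (δ / 2), hδR _ hc.le (by linarith [min_le_right (x - t) (δ / 2)]),
    by linarith [min_le_left (x - t) (δ / 2)], by linarith⟩

end Resolvent

lemma norm_mul_norm_le_mulVec_norm [Fintype m] {B : Matrix m m ℝ} (hB : ∀ i j, 0 ≤ B i j)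
    {z : ℂ} {v : m → ℂ} (hv : B.map Complex.ofReal *ᵥ v = z • v) (i : m) :
    ‖z‖ * ‖v i‖ ≤ (B *ᵥ fun k => ‖v k‖) i := by
  rw [← norm_mul, ← smul_eq_mul, ← Pi.smul_apply, ← hv]
  refine (norm_sum_le _ _).trans_eq (Finset.sum_congr rfl fun k _ => ?_)
  dsimp only
  rw [norm_mul, map_apply, Complex.norm_real, Real.norm_of_nonneg (hB i k)]

section PerronFrobenius

variable [Fintype m] [DecidableEq m] {B : Matrix m m ℝ}

lemma exists_nonneg_specRadius_mul_le_mulVec [Nonempty m] (hB : ∀ i j, 0 ≤ B i j) :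
    ∃ w : m → ℝ, (∀ i, 0 ≤ w i) ∧ w ≠ 0 ∧ ∀ i, specRadius B * w i ≤ (B *ᵥ w) i := by
  obtain ⟨z, hz, hzρ⟩ := exists_norm_eq_specRadius B
  obtain ⟨v, hv0, hv⟩ := exists_mulVec_eq_smul_of_mem_spectrum hz
  refine ⟨fun k => ‖v k‖, fun k => norm_nonneg _, fun h => hv0 ?_, fun i => ?_⟩
  · exact funext fun k => norm_eq_zero.1 (congrFun h k)
  · rw [← hzρ]
    exact norm_mul_norm_le_mulVec_norm hB hv i

lemma eq_zero_of_resolvent_nonneg {t : ℝ} (hdet : (t • (1 : Matrix m m ℝ) - B).det ≠ 0)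
    (hR : ∀ i j, 0 ≤ (t • (1 : Matrix m m ℝ) - B)⁻¹ i j) {w : m → ℝ} (hw : ∀ i, 0 ≤ w i)
    (h : ∀ i, t * w i ≤ (B *ᵥ w) i) : w = 0 := by
  have hneg := nonneg_of_inv_nonneg_of_mulVec_nonneg hdet hR (u := -w) fun i => by
    simp only [mulVec_neg, sub_mulVec, smul_mulVec, one_mulVec, Pi.neg_apply, Pi.sub_apply,
      Pi.smul_apply, smul_eq_mul]
    linarith [h i]
  exact funext fun i => le_antisymm (by simpa using hneg i) (hw i)

theorem le_specRadius_of_mul_le_mulVec (hB : ∀ i j, 0 ≤ B i j) {r : ℝ} {w : m → ℝ}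
    (hw : ∀ i, 0 ≤ w i) (hw0 : w ≠ 0) (h : ∀ i, r * w i ≤ (B *ᵥ w) i) : r ≤ specRadius B := by
  by_contra! hlt
  obtain ⟨t, hρt, htr⟩ := exists_between hlt
  have hdet : ∀ s, t ≤ s → (s • (1 : Matrix m m ℝ) - B).det ≠ 0 := fun s hs =>
    det_ne_zero_of_specRadius_lt (hρt.trans_le hs)
  exact hw0 (eq_zero_of_resolvent_nonneg (hdet t le_rfl) (resolvent_nonneg hB hdet) hw
    fun i => (mul_le_mul_of_nonneg_right htr.le (hw i)).trans (h i))

theorem specRadius_eq_of_vecMul_eq_smul [Nonempty m] (hB : ∀ i j, 0 ≤ B i j) {y : m → ℝ}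
    (hy : ∀ i, 0 < y i) {s : ℝ} (hyB : y ᵥ* B = s • y) : specRadius B = s := by
  have hs : 0 ≤ s := by
    obtain ⟨i⟩ := ‹Nonempty m›
    have : s * y i = (y ᵥ* B) i := by rw [hyB]; rfl
    refine nonneg_of_mul_nonneg_left ?_ (hy i)
    rw [this]
    exact Finset.sum_nonneg fun k _ => mul_nonneg (hy k).le (hB k i)
  refine IsGreatest.csSup_eq ⟨⟨s, ofReal_mem_spectrum_map_iff.2 ?_, ?_⟩, ?_⟩
  · refine exists_vecMul_eq_zero_iff.1 ⟨y, fun h => (hy (Classical.arbitrary m)).ne' ?_, ?_⟩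
    · rw [h]; rfl
    · rw [vecMul_sub, vecMul_smul, vecMul_one, hyB, sub_self]
  · simp [abs_of_nonneg hs]
  · rintro _ ⟨z, hz, rfl⟩
    obtain ⟨v, hv0, hv⟩ := exists_mulVec_eq_smul_of_mem_spectrum hz
    set w : m → ℝ := fun k => ‖v k‖
    have hyw : 0 < y ⬝ᵥ w := by
      obtain ⟨k, hk⟩ := Function.ne_iff.1 hv0
      exact Finset.sum_pos' (fun i _ => mul_nonneg (hy i).le (norm_nonneg _))
        ⟨k, Finset.mem_univ k, mul_pos (hy k) (norm_pos_iff.2 hk)⟩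
    refine le_of_mul_le_mul_right ?_ hyw
    calc ‖z‖ * (y ⬝ᵥ w) = y ⬝ᵥ (‖z‖ • w) := by rw [dotProduct_smul, smul_eq_mul]
      _ ≤ y ⬝ᵥ (B *ᵥ w) := Finset.sum_le_sum fun i _ =>
          mul_le_mul_of_nonneg_left (norm_mul_norm_le_mulVec_norm hB hv i) (hy i).le
      _ = s * (y ⬝ᵥ w) := by rw [dotProduct_mulVec, hyB, smul_dotProduct, smul_eq_mul]

end PerronFrobenius

lemma mulVec_pos_of_pos [Fintype m] {C : Matrix m m ℝ} (hC : ∀ i j, 0 < C i j) {z : m → ℝ}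
    (hz : ∀ i, 0 ≤ z i) (hz0 : z ≠ 0) (i : m) : 0 < (C *ᵥ z) i := by
  obtain ⟨k, hk⟩ := Function.ne_iff.1 hz0
  exact Finset.sum_pos' (fun l _ => mul_nonneg (hC i l).le (hz l))
    ⟨k, Finset.mem_univ k, mul_pos (hC i k) ((hz k).lt_of_ne' hk)⟩

lemma mulVec_apply_eq_submatrix_mulVec [Fintype m] {R : Type*} [NonUnitalNonAssocSemiring R]
    {M : Matrix m m R} {p : m → Prop} [DecidablePred p] {u : m → R}
    (hu : ∀ i, ¬ p i → u i = 0) (a : Subtype p) :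
    (M *ᵥ u) a = (M.submatrix Subtype.val Subtype.val *ᵥ fun b : Subtype p => u b) a := by
  have h0 : ∑ x : {x // ¬ p x}, M a x * u x = 0 :=
    Finset.sum_eq_zero fun x _ => by rw [hu x x.2, mul_zero]
  rw [mulVec, dotProduct, ← Fintype.sum_subtype_add_sum_subtype p, h0, add_zero]
  rfl

/-- `IsIrreducibleMatrix` for an arbitrary index type. -/
def IsStronglyConnected (B : Matrix m m ℝ) : Prop :=
  ∀ i j, Relation.ReflTransGen (fun a b => B a b ≠ 0) i j

section Irreducible

variable {B : Matrix m m ℝ}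

lemma IsStronglyConnected.of_offDiag {A : Matrix m m ℝ} (hA : A.IsStronglyConnected)
    (h : ∀ i j, i ≠ j → A i j ≠ 0 → B i j ≠ 0) : B.IsStronglyConnected := fun i j => by
  induction hA i j with
  | refl => exact .refl
  | @tail b c _ hbc ih =>
    by_cases hb : b = c
    · exact hb ▸ ih
    · exact ih.tail (h b c hb hbc)

lemma IsStronglyConnected.transpose (hB : B.IsStronglyConnected) : Bᵀ.IsStronglyConnected :=
  fun i j => Relation.reflTransGen_swap.2 (hB j i)

lemma IsStronglyConnected.eq_zero_of_mulVec_eq_smul [Fintype m] (hB : ∀ i j, 0 ≤ B i j)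
    (hconn : B.IsStronglyConnected) {w : m → ℝ} (hw : ∀ i, 0 ≤ w i) {r : ℝ}
    (hBw : B *ᵥ w = r • w) {i₀ : m} (hi₀ : w i₀ = 0) : w = 0 := funext fun j => by
  change w j = 0
  induction hconn i₀ j with
  | refl => exact hi₀
  | @tail b c _ hbc ih =>
    have hb : ∑ l, B b l * w l = 0 := by
      change (B *ᵥ w) b = 0
      rw [hBw, Pi.smul_apply, ih, smul_zero]
    have := (Finset.sum_eq_zero_iff_of_nonneg fun l _ => mul_nonneg (hB b l) (hw l)).1 hb c
      (Finset.mem_univ c)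
    exact (mul_eq_zero.1 this).resolve_left hbc

variable [Fintype m] [DecidableEq m]

lemma IsStronglyConnected.exists_pos_commute (hB : ∀ i j, 0 ≤ B i j)
    (hconn : B.IsStronglyConnected) : ∃ C : Matrix m m ℝ, (∀ i j, 0 < C i j) ∧ Commute C B := by
  have hpath : ∀ i j, ∃ k, 0 < (B ^ k) i j := fun i j => by
    induction hconn i j with
    | refl => exact ⟨0, by simp⟩
    | @tail b c _ hbc ih =>
      obtain ⟨k, hk⟩ := ih
      refine ⟨k + 1, ?_⟩
      rw [pow_succ, mul_apply]
      exact Finset.sum_pos' (fun l _ => mul_nonneg (pow_apply_nonneg hB k i l) (hB l c))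
        ⟨b, Finset.mem_univ b, mul_pos hk ((hB b c).lt_of_ne' hbc)⟩
  choose f hf using hpath
  refine ⟨∑ p : m × m, B ^ f p.1 p.2, fun i j => ?_,
    Commute.sum_left _ _ _ fun p _ => (Commute.refl B).pow_left _⟩
  rw [sum_apply]
  exact Finset.sum_pos' (fun p _ => pow_apply_nonneg hB _ i j)
    ⟨(i, j), Finset.mem_univ _, hf i j⟩

/-- If `z = B w - ρ w` were nonzero, then for a positive `C` commuting with `B` the positive
vector `C w` would satisfy `B (C w) ≥ (ρ + δ) C w`, against `le_specRadius_of_mul_le_mulVec`. -/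
theorem IsStronglyConnected.mulVec_eq_of_specRadius_mul_le (hB : ∀ i j, 0 ≤ B i j)
    (hconn : B.IsStronglyConnected) {w : m → ℝ} (hw : ∀ i, 0 ≤ w i) (hw0 : w ≠ 0)
    (h : ∀ i, specRadius B * w i ≤ (B *ᵥ w) i) : B *ᵥ w = specRadius B • w := by
  by_contra hne
  have : Nonempty m := let ⟨i, _⟩ := Function.ne_iff.1 hw0; ⟨i⟩
  set z := B *ᵥ w - specRadius B • w
  have hz : ∀ i, 0 ≤ z i := fun i => sub_nonneg.2 (h i)
  have hz0 : z ≠ 0 := sub_ne_zero.2 hne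
  obtain ⟨C, hC, hCB⟩ := hconn.exists_pos_commute hB
  have hx := mulVec_pos_of_pos hC hw hw0
  have hCz := mulVec_pos_of_pos hC hz hz0
  have hBx : B *ᵥ (C *ᵥ w) = specRadius B • (C *ᵥ w) + C *ᵥ z := by
    rw [mulVec_mulVec, ← hCB.eq, ← mulVec_mulVec, ← mulVec_smul, ← mulVec_add,
      add_sub_cancel]
  obtain ⟨i₀, -, hi₀⟩ := Finset.exists_min_image Finset.univ
    (fun i => (C *ᵥ z) i / (C *ᵥ w) i) Finset.univ_nonempty
  set δ := (C *ᵥ z) i₀ / (C *ᵥ w) i₀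
  have hδ : 0 < δ := div_pos (hCz i₀) (hx i₀)
  have := le_specRadius_of_mul_le_mulVec hB (r := specRadius B + δ) (fun i => (hx i).le)
    (fun h0 => (hx i₀).ne' (congrFun h0 i₀)) fun i => by
      have := (le_div_iff₀ (hx i)).1 (hi₀ i (Finset.mem_univ i))
      rw [hBx, Pi.add_apply, Pi.smul_apply, smul_eq_mul]
      linarith
  linarith

theorem IsStronglyConnected.exists_pos_mulVec_eq [Nonempty m] (hB : ∀ i j, 0 ≤ B i j)
    (hconn : B.IsStronglyConnected) :
    ∃ y : m → ℝ, (∀ i, 0 < y i) ∧ B *ᵥ y = specRadius B • y := by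
  obtain ⟨w, hw, hw0, h⟩ := exists_nonneg_specRadius_mul_le_mulVec hB
  have hBw := hconn.mulVec_eq_of_specRadius_mul_le hB hw hw0 h
  exact ⟨w, fun i => (hw i).lt_of_ne' fun hi =>
    hw0 (hconn.eq_zero_of_mulVec_eq_smul hB hw hBw hi), hBw⟩

theorem IsStronglyConnected.specRadius_submatrix_lt (hB : ∀ i j, 0 ≤ B i j)
    (hconn : B.IsStronglyConnected) {p : m → Prop} [DecidablePred p] [Nonempty (Subtype p)]
    {i₀ : m} (hi₀ : ¬ p i₀) :
    specRadius (B.submatrix (Subtype.val : Subtype p → m) Subtype.val) < specRadius B := by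
  set BJ := B.submatrix (Subtype.val : Subtype p → m) Subtype.val
  obtain ⟨w, hw, hw0, h⟩ := exists_nonneg_specRadius_mul_le_mulVec (B := BJ) fun a b => hB a b
  set w' : m → ℝ := fun i => if hi : p i then w ⟨i, hi⟩ else 0
  have hw' : ∀ i, 0 ≤ w' i := fun i => by
    by_cases hi : p i <;> simp [w', hi, hw]
  have hw'0 : w' ≠ 0 := fun h0 => hw0 (funext fun a => by simpa [w', a.2] using congrFun h0 a)
  have hsub : ∀ i, specRadius BJ * w' i ≤ (B *ᵥ w') i := fun i => by
    by_cases hi : p i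
    · have hw'w : (fun b : Subtype p => w' b) = w := funext fun b => dif_pos b.2
      rw [mulVec_apply_eq_submatrix_mulVec (p := p) (fun k hk => dif_neg hk) ⟨i, hi⟩, hw'w,
        show w' i = w ⟨i, hi⟩ from dif_pos hi]
      exact h ⟨i, hi⟩
    · rw [show w' i = 0 from dif_neg hi, mul_zero]
      exact Finset.sum_nonneg fun k _ => mul_nonneg (hB i k) (hw' k)
  refine (le_specRadius_of_mul_le_mulVec hB hw' hw'0 hsub).lt_of_ne fun heq => hw'0 ?_
  rw [heq] at hsub
  exact hconn.eq_zero_of_mulVec_eq_smul hB hw'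
    (hconn.mulVec_eq_of_specRadius_mul_le hB hw' hw'0 hsub) (i₀ := i₀) (by simp [w', hi₀])

/-- The principal submatrix of `ρ(B) • 1 - B` on a proper set of indices is a nonsingular
M-matrix, so it has a nonnegative inverse. -/
theorem IsStronglyConnected.nonneg_of_mulVec_nonneg (hB : ∀ i j, 0 ≤ B i j)
    (hconn : B.IsStronglyConnected) {p : m → Prop} [DecidablePred p] {i₀ : m} (hi₀ : ¬ p i₀)
    {u : m → ℝ} (hu : ∀ i, ¬ p i → u i = 0)
    (hAu : ∀ i, p i → 0 ≤ ((specRadius B • (1 : Matrix m m ℝ) - B) *ᵥ u) i) (i : m) :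
    0 ≤ u i := by
  by_cases hi : p i
  swap
  · exact (hu i hi).ge
  have : Nonempty (Subtype p) := ⟨⟨i, hi⟩⟩
  set BJ := B.submatrix (Subtype.val : Subtype p → m) Subtype.val
  have hdet : ∀ s, specRadius B ≤ s →
      (s • (1 : Matrix (Subtype p) (Subtype p) ℝ) - BJ).det ≠ 0 := fun s hs =>
    det_ne_zero_of_specRadius_lt ((hconn.specRadius_submatrix_lt hB hi₀).trans_le hs)
  have hAJ : specRadius B • (1 : Matrix (Subtype p) (Subtype p) ℝ) - BJ =
      (specRadius B • (1 : Matrix m m ℝ) - B).submatrix Subtype.val Subtype.val := by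
    ext a b
    simp [BJ, one_apply, Subtype.ext_iff]
  refine nonneg_of_inv_nonneg_of_mulVec_nonneg (hdet _ le_rfl)
    (resolvent_nonneg (B := BJ) (fun a b => hB a b) hdet) (u := fun a => u a) (fun a => ?_) ⟨i, hi⟩
  rw [hAJ, ← mulVec_apply_eq_submatrix_mulVec hu]
  exact hAu a a.2

end Irreducible

end Matrix

open Matrix

lemma specRad_eq_specRadius {n : ℕ} (B : Matrix (Fin n) (Fin n) ℝ) : specRad B = B.specRadius :=
  rfl

lemma exists_notMem_column {ι : Type*} [PartialOrder ι] {S : Set (ι × ι)}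
    (hS : S ⊆ {p : ι × ι | p.1 ≤ p.2}) {a b : ι} (hb : ∀ j, j ≤ b) (hab : (a, b) ∉ S) (j : ι) :
    ∃ i, (i, j) ∉ S := by
  by_cases hj : j = b
  · exact ⟨a, hj ▸ hab⟩
  · exact ⟨b, fun h => hj ((hb j).antisymm (hS h))⟩

theorem IsFSAIUpperFactor.nonneg {n : ℕ} {B U : Matrix (Fin n) (Fin n) ℝ}
    {S : Set (Fin n × Fin n)} (hB : ∀ i j, 0 ≤ B i j) (hconn : B.IsStronglyConnected)
    (hU : IsFSAIUpperFactor (specRad B • 1 - B) U S) (hS : ∀ j, ∃ i, (i, j) ∉ S) (i j : Fin n) :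
    0 ≤ U i j := by
  classical
  obtain ⟨i₀, hi₀⟩ := hS j
  refine hconn.nonneg_of_mulVec_nonneg hB (p := fun k => (k, j) ∈ S) hi₀
    (u := fun k => U k j) (fun k hk => hU.2.1 (k, j) hk) (fun k hk => ?_) i
  change 0 ≤ ((specRad B • (1 : Matrix (Fin n) (Fin n) ℝ) - B) * U) k j
  rw [hU.2.2 (k, j) hk]
  split_ifs <;> norm_num

theorem IsFSAIUpperFactor.isZMatrix_mul {n : ℕ} {A U : Matrix (Fin n) (Fin n) ℝ}
    {S : Set (Fin n × Fin n)} (hA : IsZMatrix A) (hU : IsFSAIUpperFactor A U S)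
    (hUnn : ∀ i j, 0 ≤ U i j) : IsZMatrix (A * U) := by
  intro i j hij
  by_cases hijS : (i, j) ∈ S
  · simp [hU.2.2 (i, j) hijS, hij]
  · rw [mul_apply]
    refine Finset.sum_nonpos fun k _ => ?_
    by_cases hkS : (k, j) ∈ S
    · exact mul_nonpos_of_nonpos_of_nonneg (hA i k fun hik => hijS (hik ▸ hkS)) (hUnn k j)
    · simp [hU.2.1 (k, j) hkS]

/-- Any `s` dominating the diagonal writes `M = s • 1 - B` with `B ≥ 0`; the positive left
eigenvector `y` of `B` then forces `ρ(B) = s`. -/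
theorem IsZMatrix.isSingularMMatrix_of_vecMul_eq_zero {n : ℕ} [Nonempty (Fin n)]
    {M : Matrix (Fin n) (Fin n) ℝ} (hM : IsZMatrix M) {y : Fin n → ℝ} (hy : ∀ i, 0 < y i)
    (hyM : y ᵥ* M = 0) : IsSingularMMatrix M := by
  set s := ∑ i, |M i i|
  have hB : ∀ i j, 0 ≤ (s • 1 - M) i j := fun i j => by
    by_cases hij : i = j
    · subst hij
      have := (le_abs_self (M i i)).trans
        (Finset.single_le_sum (fun k _ => abs_nonneg (M k k)) (Finset.mem_univ i))
      simpa using this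
    · simpa [one_apply_ne hij] using hM i j hij
  refine ⟨hM, s • 1 - M, hB, ?_⟩
  rw [specRad_eq_specRadius, specRadius_eq_of_vecMul_eq_smul hB hy (s := s)
    (by rw [vecMul_sub, hyM, vecMul_smul, vecMul_one, sub_zero]), sub_sub_cancel]

theorem fsai_AU_singular_M (n : ℕ) (hn : 2 ≤ n)
    (A : Matrix (Fin n) (Fin n) ℝ)
    (hA : IsSingularMMatrix A) (hirr : IsIrreducibleMatrix A)
    (S : Set (Fin n × Fin n))
    (hS1 : S ⊆ {p : Fin n × Fin n | p.1 ≤ p.2})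
    (hS3 : ((⟨n - 2, by omega⟩ : Fin n), (⟨n - 1, by omega⟩ : Fin n)) ∉ S)
    (U : Matrix (Fin n) (Fin n) ℝ) (hU : IsFSAIUpperFactor A U S) :
    IsSingularMMatrix (A * U) := by
  obtain ⟨hAZ, B, hB, rfl⟩ := hA
  have : Nonempty (Fin n) := ⟨⟨0, by omega⟩⟩
  have hconn : B.IsStronglyConnected :=
    IsStronglyConnected.of_offDiag hirr fun i j hij h => by simpa [one_apply_ne hij] using h
  obtain ⟨y, hy, hyB⟩ :=
    IsStronglyConnected.exists_pos_mulVec_eq (B := Bᵀ) (fun i j => hB j i) hconn.transpose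
  have hyA : y ᵥ* (specRad B • 1 - B) = 0 := by
    rw [vecMul_sub, vecMul_smul, vecMul_one, ← mulVec_transpose, hyB, specRadius_transpose,
      specRad_eq_specRadius, sub_self]
  have hlast : ∀ j : Fin n, j ≤ ⟨n - 1, by omega⟩ := fun j =>
    Fin.le_def.2 (Nat.le_sub_one_of_lt j.2)
  have hUnn := hU.nonneg hB hconn (exists_notMem_column hS1 hlast hS3)
  exact (hU.isZMatrix_mul hAZ hUnn).isSingularMMatrix_of_vecMul_eq_zero hy
    (by rw [← vecMul_vecMul, hyA, zero_vecMul])
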